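/- The operator S ⊕ 0 on ℓ²(ℕ) ⊕ ℓ²(ℕ), where S is the unilateral shift, is not a complex symmetric operator. -/

import Mathlib

/-! If `C` is a conjugation with `T C = C T†`, then `C` maps `ker T† ∩ range T†` injectively
into `ker T ∩ range T`. For `D = S ⊕ 0` the latter space is trivial because `S` is injective,
whereas `D† = S* ⊕ 0` sends `(e₁, 0)` to `(e₀, 0)` and kills `(e₀, 0)`. -/

noncomputable section

open ContinuousLinearMap

def IsConjugation {H : Type*} [NormedAddCommGroup H] [InnerProductSpace ℂ H]
    (C : H → H) : Prop :=
  (∀ x y, C (x + y) = C x + C y) ∧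
  (∀ (a : ℂ) (x : H), C (a • x) = (starRingEnd ℂ) a • C x) ∧
  (∀ x, C (C x) = x) ∧
  (∀ x y : H, (inner ℂ (C x) (C y) : ℂ) = inner ℂ y x)

def IsComplexSymmetric {H : Type*} [NormedAddCommGroup H] [InnerProductSpace ℂ H]
    [CompleteSpace H] (T : H →L[ℂ] H) : Prop :=
  ∃ C : H → H, IsConjugation C ∧ ∀ x, T x = C (adjoint T (C x))

/-- `ℓ²(ℕ)`. -/
abbrev ellTwo : Type := lp (fun _ : ℕ => ℂ) 2

/-- The standard basis vector `eₙ` of `ℓ²(ℕ)`. -/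
def e (n : ℕ) : ellTwo := lp.single 2 n (1 : ℂ)

section ComplexSymmetric

variable {H : Type*} [NormedAddCommGroup H] [InnerProductSpace ℂ H]

theorem IsConjugation.map_zero {C : H → H} (hC : IsConjugation C) : C 0 = 0 := by
  simpa using hC.2.1 0 0

namespace IsComplexSymmetric

variable [CompleteSpace H] {T : H →L[ℂ] H}

theorem exists_isConjugation_intertwines (hT : IsComplexSymmetric T) :
    ∃ C : H → H, IsConjugation C ∧ ∀ x, T (C x) = C (adjoint T x) := by
  obtain ⟨C, hC, hTC⟩ := hT
  exact ⟨C, hC, fun x => by rw [hTC, hC.2.2.1]⟩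

theorem ker_adjoint_comp_self_le (hT : IsComplexSymmetric T)
    (h : LinearMap.ker (T ∘L T : H →ₗ[ℂ] H) ≤ LinearMap.ker (T : H →ₗ[ℂ] H)) :
    LinearMap.ker (adjoint T ∘L adjoint T : H →ₗ[ℂ] H) ≤
      LinearMap.ker (adjoint T : H →ₗ[ℂ] H) := by
  obtain ⟨C, hC, hTC⟩ := hT.exists_isConjugation_intertwines
  intro y hy
  simp only [LinearMap.mem_ker, coe_coe, coe_comp, Function.comp_apply] at hy ⊢
  have hTTCy : T (T (C y)) = 0 := by rw [hTC, hTC, hy, hC.map_zero]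
  have hTCy : C (adjoint T y) = 0 := by
    rw [← hTC]; simpa using h (by simpa using hTTCy)
  rw [← hC.2.2.1 (adjoint T y), hTCy, hC.map_zero]

end IsComplexSymmetric

end ComplexSymmetric

theorem inner_e_left (n : ℕ) (x : ellTwo) : (inner ℂ (e n) x : ℂ) = x n := by
  simp [e, lp.inner_single_left]

theorem inner_e_e (m n : ℕ) : (inner ℂ (e m) (e n) : ℂ) = if m = n then 1 else 0 := by
  rw [inner_e_left]
  simp [e, lp.single_apply, Pi.single_apply]

theorem ellTwo.ext_inner_e {x y : ellTwo}
    (h : ∀ n, (inner ℂ (e n) x : ℂ) = inner ℂ (e n) y) : x = y :=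
  lp.ext <| funext fun n => by simpa only [inner_e_left] using h n

theorem e_ne_zero (n : ℕ) : e n ≠ 0 := by
  intro h
  simpa [e] using congrArg (fun x : ellTwo => x n) h

theorem ellTwo.ext_e {F : Type*} [AddCommMonoid F] [Module ℂ F] [TopologicalSpace F] [T2Space F]
    {f g : ellTwo →L[ℂ] F} (h : ∀ n, f (e n) = g (e n)) : f = g :=
  lp.ext_continuousLinearMap ENNReal.ofNat_ne_top fun n => ext_ring (h n)

section Shift

variable {S : ellTwo →L[ℂ] ellTwo}

theorem adjoint_comp_shift_eq_id (hS : ∀ n, S (e n) = e (n + 1)) :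
    adjoint S ∘L S = ContinuousLinearMap.id ℂ ellTwo := by
  refine ellTwo.ext_e fun n => ellTwo.ext_inner_e fun m => ?_
  simp [adjoint_inner_right, hS, inner_e_e]

theorem shift_injective (hS : ∀ n, S (e n) = e (n + 1)) : Function.Injective S :=
  Function.LeftInverse.injective (g := adjoint S) fun x => by
    simpa using congrArg (· x) (adjoint_comp_shift_eq_id hS)

theorem adjoint_shift_e_succ (hS : ∀ n, S (e n) = e (n + 1)) (n : ℕ) :
    adjoint S (e (n + 1)) = e n := by
  rw [← hS, ← comp_apply, adjoint_comp_shift_eq_id hS, id_apply]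

theorem adjoint_shift_e_zero (hS : ∀ n, S (e n) = e (n + 1)) : adjoint S (e 0) = 0 :=
  ellTwo.ext_inner_e fun m => by simp [adjoint_inner_right, hS, inner_e_e]

end Shift

section OplusZero

variable {E : Type*} [NormedAddCommGroup E] [InnerProductSpace ℂ E]
  {A : E →L[ℂ] E} {D : WithLp 2 (E × E) →L[ℂ] WithLp 2 (E × E)}

theorem ker_comp_self_le_of_oplus_zero
    (hD : ∀ x, D x = (WithLp.equiv 2 (E × E)).symm (A ((WithLp.equiv 2 (E × E)) x).1, 0))
    (hA : Function.Injective A) :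
    LinearMap.ker (D ∘L D : WithLp 2 (E × E) →ₗ[ℂ] WithLp 2 (E × E)) ≤
      LinearMap.ker (D : WithLp 2 (E × E) →ₗ[ℂ] WithLp 2 (E × E)) := by
  intro x hx
  simp only [LinearMap.mem_ker, coe_coe, coe_comp, Function.comp_apply] at hx ⊢
  rw [hD, hD] at hx
  rw [hD]
  simp only [WithLp.equiv_apply, WithLp.equiv_symm_apply, WithLp.ofLp_fst, WithLp.toLp_eq_zero,
    Prod.mk_eq_zero, and_true] at hx ⊢
  exact hA (hx.trans (map_zero A).symm)

theorem adjoint_apply_of_oplus_zero [CompleteSpace E]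
    (hD : ∀ x, D x = (WithLp.equiv 2 (E × E)).symm (A ((WithLp.equiv 2 (E × E)) x).1, 0))
    (x : WithLp 2 (E × E)) :
    adjoint D x = WithLp.toLp 2 (adjoint A x.fst, 0) := by
  refine ext_inner_left ℂ fun y => ?_
  simp [adjoint_inner_right, hD]

end OplusZero

theorem shift_oplus_zero_not_complexSymmetric
    (S : ellTwo →L[ℂ] ellTwo) (hS : ∀ n, S (e n) = e (n + 1))
    (D : WithLp 2 (ellTwo × ellTwo) →L[ℂ] WithLp 2 (ellTwo × ellTwo))
    (hD : ∀ x, D x = (WithLp.equiv 2 (ellTwo × ellTwo)).symm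
      (S ((WithLp.equiv 2 (ellTwo × ellTwo)) x).1,
       0)) :
    ¬ IsComplexSymmetric D := by
  intro hDsymm
  let f : ℕ → WithLp 2 (ellTwo × ellTwo) := fun n => WithLp.toLp 2 (e n, 0)
  have hf1 : adjoint D (f 1) = f 0 := by
    simp [f, adjoint_apply_of_oplus_zero hD, adjoint_shift_e_succ hS]
  have hf0 : adjoint D (f 0) = 0 := by
    simp [f, adjoint_apply_of_oplus_zero hD, adjoint_shift_e_zero hS]
  have hker := hDsymm.ker_adjoint_comp_self_le
    (ker_comp_self_le_of_oplus_zero hD (shift_injective hS))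
  have hf0_eq_zero : f 0 = 0 := by simpa [hf1, hf0] using @hker (f 1)
  exact e_ne_zero 0 (congrArg WithLp.fst hf0_eq_zero)
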